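/- arXiv:1209.4307 — 3 statements merged into one kernel-verified Lean document; each statement's English description precedes it below -/
import Mathlib

section
/- Let C be a small category. If A is a complete abelian category with enough injectives, then the functor category C(A) has enough injectives; that is, every object of C(A) admits a monomorphism into an injective object of C(A). -/
/-!
Evaluation at `c` has a right adjoint `R_c`, with `(R_c I).obj d = ∏_{d ⟶ c} I`, and preserves
monomorphisms, so `R_c` preserves injectives. Transposing monomorphisms `F.obj c ⟶ I_c` into
injectives gives maps `F ⟶ R_c I_c`; their product `F ⟶ ∏_c R_c I_c` is a monomorphism, since at
each `c`, followed by the counit, it recovers `F.obj c ⟶ I_c`.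
-/

open CategoryTheory Limits

namespace CategoryTheory

lemma EnoughInjectives.of_adjunctions {D : Type*} [Category* D] {A : Type*} [Category* A]
    {ι : Type*} [HasProductsOfShape ι D] [EnoughInjectives A]
    {L : ι → D ⥤ A} {R : ι → A ⥤ D} (adj : ∀ i, L i ⊣ R i)
    [∀ i, (L i).PreservesMonomorphisms]
    (hL : ∀ {X Y : D} (f : X ⟶ Y), (∀ i, Mono ((L i).map f)) → Mono f) :
    EnoughInjectives D where
  presentation X := by
    let J i := (R i).obj (Injective.under ((L i).obj X))
    have (i : ι) : Injective (J i) := Injective.injective_of_adjoint (adj i) _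
    let f : X ⟶ ∏ᶜ J := Pi.lift fun i => (adj i).homEquiv _ _ (Injective.ι _)
    have hf (i : ι) : (L i).map f ≫ (L i).map (Pi.π J i) ≫ (adj i).counit.app _ =
        Injective.ι ((L i).obj X) := by
      have : ((adj i).homEquiv _ _).symm (f ≫ Pi.π J i) = Injective.ι _ := by
        rw [Pi.lift_π, Equiv.symm_apply_apply]
      rwa [Adjunction.homEquiv_counit, Functor.map_comp, Category.assoc] at this
    exact ⟨⟨∏ᶜ J, inferInstance, f, hL f fun i => mono_of_mono_fac (hf i)⟩⟩

end CategoryTheory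

theorem functor_category_enoughInjectives_of_complete_general
    (C : Type v) [SmallCategory C] (A : Type u) [Category.{v} A]
    [HasLimits A] [EnoughInjectives A] :
    EnoughInjectives (C ⥤ A) :=
  EnoughInjectives.of_adjunctions (evaluationAdjunctionLeft A)
    fun f (_ : ∀ c, Mono (f.app c)) => NatTrans.mono_of_mono_app f

theorem functor_category_enoughInjectives_of_complete
    (C : Type v) [SmallCategory C] (A : Type u) [Category.{v} A]
    [Abelian A] [HasLimits A] [EnoughInjectives A] :
    EnoughInjectives (C ⥤ A) :=
  functor_category_enoughInjectives_of_complete_general C A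
end

section
/- Let A be an abelian category with enough injectives and let C be a category with finitely many objects and finitely many morphisms. Then the functor category C(A) has enough injectives. -/
/-!
Evaluation at `c` has a right adjoint `R_c` (sending `a` to `d ↦ ∏_{d ⟶ c} a`), and it preserves
monomorphisms, so `R_c` preserves injectives. Embedding each `F c` into an injective `I_c`, the
adjoint maps `F ⟶ R_c I_c` assemble into `F ⟶ ∏_c R_c I_c`, a product of injectives; it is a
monomorphism because evaluating at `c` and projecting recovers `F c ⟶ I_c`. Finiteness of the
arrows of `C` provides the finite products over hom-sets and over objects.
-/

open CategoryTheory Limits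

theorem EnoughInjectives.of_adjunctions {C : Type*} [Category* C] {ι : Type*}
    {D : ι → Type*} [∀ i, Category* (D i)] {L : ∀ i, C ⥤ D i} {R : ∀ i, D i ⥤ C}
    (adj : ∀ i, L i ⊣ R i) [∀ i, (L i).PreservesMonomorphisms] [∀ i, EnoughInjectives (D i)]
    [HasProductsOfShape ι C]
    (hL : ∀ ⦃X Y : C⦄ (f : X ⟶ Y), (∀ i, Mono ((L i).map f)) → Mono f) :
    EnoughInjectives C where
  presentation X := by
    let I i := (R i).obj (Injective.under ((L i).obj X))
    let f : X ⟶ ∏ᶜ I := Pi.lift fun i => (adj i).homEquiv _ _ (Injective.ι _)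
    have hI : Injective (∏ᶜ I) :=
      (isInjective C).prop_pi I fun i => (adj i).map_injective _ inferInstance
    refine ⟨⟨∏ᶜ I, hI, f, hL f fun i => ?_⟩⟩
    have hfac : (L i).map f ≫ (L i).map (Pi.π I i) ≫ (adj i).counit.app _ = Injective.ι _ := by
      rw [← Functor.map_comp_assoc, Pi.lift_π]
      exact ((adj i).homEquiv _ _).symm_apply_apply _
    exact mono_of_mono_fac hfac

theorem finite_of_finite_arrows (C : Type*) [Category* C] [Finite (Σ a b : C, a ⟶ b)] :
    Finite C :=
  Finite.of_injective (fun c => (⟨c, c, 𝟙 c⟩ : Σ a b : C, a ⟶ b)) fun _ _ h => congrArg Sigma.fst h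

theorem finite_hom_of_finite_arrows {C : Type*} [Category* C] [Finite (Σ a b : C, a ⟶ b)]
    (a b : C) : Finite (a ⟶ b) :=
  Finite.of_injective (fun f => (⟨a, b, f⟩ : Σ a b : C, a ⟶ b)) fun _ _ h => by simpa using h

theorem functor_category_enoughInjectives_of_finite_general
    (C : Type u₁) [Category.{v₁} C] [Finite (Σ (a b : C), a ⟶ b)]
    (A : Type u₂) [Category.{v₂} A] [Abelian A] [EnoughInjectives A] :
    EnoughInjectives (C ⥤ A) := by
  have := finite_of_finite_arrows C
  have := finite_hom_of_finite_arrows (C := C)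
  exact EnoughInjectives.of_adjunctions (evaluationAdjunctionLeft A)
    fun _ _ f => (NatTrans.mono_iff_mono_app f).2

theorem functor_category_enoughInjectives_of_finite
    (C : Type u₁) [Category.{v₁} C] [Finite C] [Finite (Σ (a b : C), a ⟶ b)]
    (A : Type u₂) [Category.{v₂} A] [Abelian A] [EnoughInjectives A] :
    EnoughInjectives (C ⥤ A) :=
  functor_category_enoughInjectives_of_finite_general C A
end

section
/- Let Q be a quiver with at least one vertex and let 𝒬 be its path category. Let A and B be additive categories (in particular, with zero objects) and let F : A → B be an additive functor. Then F is an equivalence of categories if and only if the induced functor F_𝒬 : 𝒬(A) → 𝒬(B) is an equivalence of categories. -/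
/-!
Evaluating at an object `j` of `J` and taking constant functors exhibit `F` as a retract of
`(whiskeringRight J A B).obj F`, since `F ⋙ const J ≅ const J ⋙ (whiskeringRight J A B).obj F`
and `const J ⋙ (evaluation J _).obj j ≅ 𝟭 _`. Conjugating a quasi-inverse of the induced functor
by these two functors therefore gives a quasi-inverse of `F`.
-/

open CategoryTheory Limits

namespace CategoryTheory.Functor

variable {J A B : Type*} [Category J] [Category A] [Category B]

noncomputable def equivalenceOfIsEquivalenceWhiskeringRightObj (F : A ⥤ B)
    [((whiskeringRight J A B).obj F).IsEquivalence] (j : J) : A ≌ B :=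
  let e := ((whiskeringRight J A B).obj F).asEquivalence
  Equivalence.mk F (const J ⋙ e.inverse ⋙ (evaluation J A).obj j)
    ((constCompEvaluationObj A j).symm ≪≫
      isoWhiskerLeft (const J) (isoWhiskerRight e.unitIso ((evaluation J A).obj j)) ≪≫
      isoWhiskerRight (compConstIso J F).symm (e.inverse ⋙ (evaluation J A).obj j))
    (isoWhiskerLeft (const J) (isoWhiskerRight e.counitIso ((evaluation J B).obj j)) ≪≫
      constCompEvaluationObj B j)

theorem isEquivalence_of_isEquivalence_whiskeringRight_obj [Nonempty J] (F : A ⥤ B)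
    [((whiskeringRight J A B).obj F).IsEquivalence] : F.IsEquivalence :=
  (equivalenceOfIsEquivalenceWhiskeringRightObj F (Classical.arbitrary J)).isEquivalence_functor

theorem isEquivalence_whiskeringRight_obj_iff [Nonempty J] (F : A ⥤ B) :
    ((whiskeringRight J A B).obj F).IsEquivalence ↔ F.IsEquivalence :=
  ⟨fun _ ↦ isEquivalence_of_isEquivalence_whiskeringRight_obj (J := J) F, fun _ ↦ inferInstance⟩

end CategoryTheory.Functor

theorem isEquivalence_iff_induced_functor_isEquivalence_general
    (V : Type u₀) [Quiver.{v₀ + 1} V] [Nonempty V]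
    (A : Type u₁) [Category.{v₁} A]
    (B : Type u₂) [Category.{v₂} B]
    (F : A ⥤ B) :
    F.IsEquivalence ↔ ((Functor.whiskeringRight (Paths V) A B).obj F).IsEquivalence :=
  have : Nonempty (Paths V) := ‹Nonempty V›
  (Functor.isEquivalence_whiskeringRight_obj_iff (J := Paths V) F).symm

theorem isEquivalence_iff_induced_functor_isEquivalence
    (V : Type u₀) [Quiver.{v₀ + 1} V] [Nonempty V]
    (A : Type u₁) [Category.{v₁} A] [Preadditive A] [HasZeroObject A]
    [HasBinaryBiproducts A]
    (B : Type u₂) [Category.{v₂} B] [Preadditive B] [HasZeroObject B]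
    [HasBinaryBiproducts B]
    (F : A ⥤ B) [F.Additive] :
    F.IsEquivalence ↔ ((Functor.whiskeringRight (Paths V) A B).obj F).IsEquivalence :=
  isEquivalence_iff_induced_functor_isEquivalence_general V A B F
end
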